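/- arXiv:2412.16070 — 2 statements merged into one kernel-verified Lean document; each statement's English description precedes it below -/
import Mathlib

section
/- For κ ≠ 0, κ < 0 and τ ≠ 0, the limit as a → ∞ of (aκ − 2τ)·ε / √((κ−4τ²)(1+a²κ−4aτ)) equals √(κ/(κ−4τ²)), where ε = sgn(κ−4τ²). In particular this limit lies strictly between 0 and 1. -/
/-- For `κ < 0` and `τ ≠ 0`, the limit as `a → ∞` of
`(aκ - 2τ)·sgn(κ-4τ²)/√((κ-4τ²)(1+a²κ-4aτ))` equals `√(κ/(κ-4τ²))`,
and this limit lies strictly between `0` and `1`. -/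
theorem cos_angle_limit (κ τ : ℝ) (hκ : κ < 0) (hτ : τ ≠ 0) :
    Filter.Tendsto
      (fun a : ℝ => (a * κ - 2 * τ) * Real.sign (κ - 4 * τ ^ 2) /
        Real.sqrt ((κ - 4 * τ ^ 2) * (1 + a ^ 2 * κ - 4 * a * τ)))
      Filter.atTop (nhds (Real.sqrt (κ / (κ - 4 * τ ^ 2)))) ∧
    Real.sqrt (κ / (κ - 4 * τ ^ 2)) ∈ Set.Ioo (0 : ℝ) 1 := by
  set C := κ - 4 * τ ^ 2 with hCdef
  have hτ2 : 0 < 4 * τ ^ 2 := by positivity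
  have hC : C < 0 := by simp only [hCdef]; linarith
  have hκ0 : κ ≠ 0 := ne_of_lt hκ
  have hsign : Real.sign C = -1 := Real.sign_of_neg hC
  -- auxiliary limits
  have t1 : Filter.Tendsto (fun a : ℝ => κ - 2 * τ / a) Filter.atTop (nhds κ) := by
    have h0 : Filter.Tendsto (fun a : ℝ => 2 * τ / a) Filter.atTop (nhds 0) :=
      Filter.Tendsto.div_atTop tendsto_const_nhds Filter.tendsto_id
    simpa using tendsto_const_nhds.sub h0
  have t2 : Filter.Tendsto (fun a : ℝ => 1 / a ^ 2 + κ - 4 * τ / a) Filter.atTop (nhds κ) := by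
    have h0 : Filter.Tendsto (fun a : ℝ => 1 / a ^ 2) Filter.atTop (nhds 0) :=
      Filter.Tendsto.div_atTop tendsto_const_nhds (Filter.tendsto_pow_atTop two_ne_zero)
    have h1 : Filter.Tendsto (fun a : ℝ => 4 * τ / a) Filter.atTop (nhds 0) :=
      Filter.Tendsto.div_atTop tendsto_const_nhds Filter.tendsto_id
    have h2 := (h0.add (tendsto_const_nhds (x := κ))).sub h1
    simpa using h2
  have hCκ : C * κ ≠ 0 := ne_of_gt (mul_pos_of_neg_of_neg hC hκ)
  have tfrac : Filter.Tendsto (fun a : ℝ => (κ - 2 * τ / a) ^ 2 / (C * (1 / a ^ 2 + κ - 4 * τ / a)))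
      Filter.atTop (nhds (κ / C)) := by
    have h : Filter.Tendsto (fun a : ℝ => (κ - 2 * τ / a) ^ 2 / (C * (1 / a ^ 2 + κ - 4 * τ / a)))
        Filter.atTop (nhds (κ ^ 2 / (C * κ))) :=
      (t1.pow 2).div (tendsto_const_nhds.mul t2) hCκ
    have : κ ^ 2 / (C * κ) = κ / C := by rw [sq, mul_comm C κ, mul_div_mul_left _ _ hκ0]
    rwa [this] at h
  have tsqrt : Filter.Tendsto (fun a : ℝ =>
      Real.sqrt ((κ - 2 * τ / a) ^ 2 / (C * (1 / a ^ 2 + κ - 4 * τ / a))))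
      Filter.atTop (nhds (Real.sqrt (κ / C))) :=
    (Real.continuous_sqrt.continuousAt).tendsto.comp tfrac
  have hev : ∀ᶠ a : ℝ in Filter.atTop,
      (a * κ - 2 * τ) * Real.sign C / Real.sqrt (C * (1 + a ^ 2 * κ - 4 * a * τ))
        = Real.sqrt ((κ - 2 * τ / a) ^ 2 / (C * (1 / a ^ 2 + κ - 4 * τ / a))) := by
    have e1 : ∀ᶠ a : ℝ in Filter.atTop, κ - 2 * τ / a < 0 :=
      t1.eventually_lt_const hκ
    have e2 : ∀ᶠ a : ℝ in Filter.atTop, 1 / a ^ 2 + κ - 4 * τ / a < 0 :=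
      t2.eventually_lt_const hκ
    filter_upwards [e1, e2, Filter.eventually_gt_atTop (0 : ℝ)] with a hn hd ha
    have ha0 : a ≠ 0 := ne_of_gt ha
    set n := κ - 2 * τ / a with hn'
    set d := 1 / a ^ 2 + κ - 4 * τ / a with hd'
    have key1 : a * κ - 2 * τ = a * n := by rw [hn']; field_simp
    have key2 : 1 + a ^ 2 * κ - 4 * a * τ = a ^ 2 * d := by rw [hd']; field_simp
    have hCd : 0 ≤ C * d := by nlinarith
    rw [key1, key2, hsign]
    rw [show C * (a ^ 2 * d) = a ^ 2 * (C * d) by ring,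
      Real.sqrt_mul (sq_nonneg a), Real.sqrt_sq ha.le,
      Real.sqrt_div (sq_nonneg n), Real.sqrt_sq_eq_abs, abs_of_neg hn]
    rw [show a * n * (-1) = a * -n by ring, mul_div_mul_left _ _ ha0]
  refine ⟨tsqrt.congr' (hev.mono fun a h => h.symm), ?_, ?_⟩
  · exact Real.sqrt_pos.mpr (div_pos_of_neg_of_neg hκ hC)
  · have h1 : κ / C - 1 = 4 * τ ^ 2 / C := by rw [div_sub_one (ne_of_lt hC), hCdef]; congr 1; ring
    have h2 : 4 * τ ^ 2 / C < 0 := div_neg_of_pos_of_neg hτ2 hC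
    have : κ / C < 1 := by linarith
    calc Real.sqrt (κ / C) < Real.sqrt 1 := by
          exact Real.sqrt_lt_sqrt (le_of_lt (div_pos_of_neg_of_neg hκ hC)) this
      _ = 1 := Real.sqrt_one
end

section
/- Let J(r, σ) := (2H/κ)(cs(r) − 1) + sn(r)·sin σ, where sn and cs are the generalized sine and cosine for curvature κ ≠ 0. If (r(t), h(t), σ(t)) satisfies r' = cos σ, and 2H = ct(r)·sin σ + σ' with ct(r) = cs(r)/sn(r), then t ↦ J(r(t), σ(t)) is constant. -/
/-- Generalized sine for curvature `κ ≠ 0`. -/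
noncomputable def sn (κ r : ℝ) : ℝ :=
  if 0 < κ then Real.sin (Real.sqrt κ * r) / Real.sqrt κ
  else Real.sinh (Real.sqrt (-κ) * r) / Real.sqrt (-κ)

/-- Generalized cosine for curvature `κ ≠ 0`. -/
noncomputable def cs (κ r : ℝ) : ℝ :=
  if 0 < κ then Real.cos (Real.sqrt κ * r)
  else Real.cosh (Real.sqrt (-κ) * r)

/-! The energy `J(r,σ)` along solutions `r' = cos σ`, `σ' = 2H - ct(r) sin σ` has derivative
`cos σ · (sn r · σ' + cs r · sin σ - 2H sn r)`, using `sn' = cs` and `cs' = -κ sn`;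
multiplying the second equation by `sn r` shows that the bracket vanishes. -/

open Real

noncomputable def profileEnergy (κ H r σ : ℝ) : ℝ :=
  (2 * H / κ) * (cs κ r - 1) + sn κ r * sin σ

lemma hasDerivAt_sn {κ : ℝ} (hκ : κ ≠ 0) (x : ℝ) : HasDerivAt (sn κ) (cs κ x) x := by
  by_cases h : 0 < κ
  · have hs : √κ ≠ 0 := (sqrt_pos.mpr h).ne'
    have hd : HasDerivAt (sn κ) (cos (√κ * x) * (√κ * 1) / √κ) x :=
      (((hasDerivAt_id' x).const_mul √κ).sin).div_const √κ |>.congr_of_eventuallyEq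
        (.of_forall fun y => if_pos h)
    refine hd.congr_deriv ?_
    simp only [cs, if_pos h]
    field_simp
  · have hs : √(-κ) ≠ 0 := (sqrt_pos.mpr (neg_pos.mpr (lt_of_le_of_ne (not_lt.mp h) hκ))).ne'
    have hd : HasDerivAt (sn κ) (cosh (√(-κ) * x) * (√(-κ) * 1) / √(-κ)) x :=
      (((hasDerivAt_id' x).const_mul √(-κ)).sinh).div_const √(-κ) |>.congr_of_eventuallyEq
        (.of_forall fun y => if_neg h)
    refine hd.congr_deriv ?_
    simp only [cs, if_neg h]
    field_simp

lemma hasDerivAt_cs (κ x : ℝ) : HasDerivAt (cs κ) (-κ * sn κ x) x := by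
  by_cases h : 0 < κ
  · have hd : HasDerivAt (cs κ) (-sin (√κ * x) * (√κ * 1)) x :=
      ((hasDerivAt_id' x).const_mul √κ).cos |>.congr_of_eventuallyEq
        (.of_forall fun y => if_pos h)
    refine hd.congr_deriv ?_
    have hs : √κ ≠ 0 := (sqrt_pos.mpr h).ne'
    simp only [sn, if_pos h]
    field_simp
    rw [sq_sqrt h.le]
    ring
  · have hd : HasDerivAt (cs κ) (sinh (√(-κ) * x) * (√(-κ) * 1)) x :=
      ((hasDerivAt_id' x).const_mul √(-κ)).cosh |>.congr_of_eventuallyEq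
        (.of_forall fun y => if_neg h)
    refine hd.congr_deriv ?_
    simp only [sn, if_neg h]
    rcases eq_or_ne √(-κ) 0 with hs | hs
    · simp [hs]
    · field_simp
      rw [sq_sqrt (neg_nonneg.mpr (not_lt.mp h))]
      ring

lemma hasDerivAt_profileEnergy_comp {κ H t σ' : ℝ} {r σ : ℝ → ℝ} (hκ : κ ≠ 0)
    (hr : HasDerivAt r (cos (σ t)) t) (hσ : HasDerivAt σ σ' t) :
    HasDerivAt (fun u => profileEnergy κ H (r u) (σ u))
      (cos (σ t) * (sn κ (r t) * σ' + cs κ (r t) * sin (σ t) - 2 * H * sn κ (r t))) t := by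
  have hd : HasDerivAt (fun u => profileEnergy κ H (r u) (σ u))
      (2 * H / κ * (-κ * sn κ (r t) * cos (σ t)) +
        (cs κ (r t) * cos (σ t) * sin (σ t) + sn κ (r t) * (cos (σ t) * σ'))) t :=
    (((hasDerivAt_cs κ (r t)).comp t hr).sub_const 1).const_mul (2 * H / κ) |>.add
      (((hasDerivAt_sn hκ (r t)).comp t hr).mul hσ.sin)
  refine hd.congr_deriv ?_
  field_simp
  ring

/-- The energy `J(r,σ) = (2H/κ)(cs r - 1) + sn r · sin σ` is a first integral of the
profile-curve ODE `r' = cos σ`, `2H = ct(r)·sin σ + σ'`. -/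
theorem energy_constant (κ H : ℝ) (hκ : κ ≠ 0) (r σ : ℝ → ℝ)
    (hr : Differentiable ℝ r) (hσ : Differentiable ℝ σ)
    (hsn : ∀ t, sn κ (r t) ≠ 0)
    (hode1 : ∀ t, deriv r t = Real.cos (σ t))
    (hode3 : ∀ t, 2 * H = (cs κ (r t) / sn κ (r t)) * Real.sin (σ t) + deriv σ t) :
    ∀ t s : ℝ,
      (2 * H / κ) * (cs κ (r t) - 1) + sn κ (r t) * Real.sin (σ t)
        = (2 * H / κ) * (cs κ (r s) - 1) + sn κ (r s) * Real.sin (σ s) := by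
  have hJ : ∀ t, HasDerivAt (fun u => profileEnergy κ H (r u) (σ u)) 0 t := by
    intro t
    have hr' : HasDerivAt r (cos (σ t)) t := hode1 t ▸ (hr t).hasDerivAt
    have hbracket :
        sn κ (r t) * deriv σ t + cs κ (r t) * sin (σ t) - 2 * H * sn κ (r t) = 0 := by
      have h := hode3 t
      field_simp [hsn t] at h
      linarith
    simpa only [hbracket, mul_zero] using
      hasDerivAt_profileEnergy_comp (H := H) hκ hr' (hσ t).hasDerivAt
  exact fun t s => is_const_of_deriv_eq_zero (fun u => (hJ u).differentiableAt)
    (fun u => (hJ u).deriv) t s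
end
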